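/- The n = 4 homotopy consistency of the curved L∞-algebra of the flat DFT algebroid for arguments (μ₀, e, f₁, f₂): for every smooth section e : ℝ^{2d} → ℝ^{2d} and all smooth functions f₁, f₂ : ℝ^{2d} → ℝ, ⟨[[e,Df₁]], Df₂⟩ + ⟨[[e,Df₂]], Df₁⟩ + ⟨D⟨e,Df₁⟩, Df₂⟩ + ⟨D⟨e,Df₂⟩, Df₁⟩ = 2⟨e, D⟨Df₁,Df₂⟩⟩. -/

import Mathlib

open scoped BigOperators

noncomputable section

/-- The index involution implementing the O(d,d) metric η with matrix [[0,1],[1,0]]: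
η_{AB} = 1 iff B = σd d A. -/
def σd (d : ℕ) (A : Fin (2*d)) : Fin (2*d) :=
  if h : (A : ℕ) < d then ⟨(A : ℕ) + d, by omega⟩
  else ⟨(A : ℕ) - d, by have := A.isLt; omega⟩

/-- A section of the DFT algebroid bundle over ℝ^{2d}. -/
abbrev Sec (d : ℕ) := (Fin (2*d) → ℝ) → Fin (2*d) → ℝ

/-- Partial derivative ∂_A f at x. -/
def pd {n : ℕ} (f : (Fin n → ℝ) → ℝ) (A : Fin n) (x : Fin n → ℝ) : ℝ :=
  fderiv ℝ f x (Pi.single A 1)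

/-- The pairing ⟨e₁,e₂⟩ = η_{AB} e₁^A e₂^B. -/
def pair {d : ℕ} (e₁ e₂ : Sec d) (x : Fin (2*d) → ℝ) : ℝ :=
  ∑ A, e₁ x A * e₂ x (σd d A)

/-- The derivative D : C^∞ → Γ(L), (Df)^A = (1/2) η^{AB} ∂_B f. -/
def Dsec {d : ℕ} (f : (Fin (2*d) → ℝ) → ℝ) : Sec d :=
  fun x A => (1/2) * pd f (σd d A) x

/-- The flat C-bracket of double field theory. -/
def cbr {d : ℕ} (e₁ e₂ : Sec d) : Sec d := fun x B =>
  (∑ A, e₁ x A * pd (fun y => e₂ y B) A x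
    - (1/2) * ∑ A, e₁ x A * pd (fun y => e₂ y (σd d A)) (σd d B) x)
  - (∑ A, e₂ x A * pd (fun y => e₁ y B) A x
    - (1/2) * ∑ A, e₂ x A * pd (fun y => e₁ y (σd d A)) (σd d B) x)

/-- SC_ρ(e₁,e₂)f = (1/2) η^{BC} ∂_B f η_{AD} (e₁^A ∂_C e₂^D − e₂^A ∂_C e₁^D). -/
def SCrho {d : ℕ} (e₁ e₂ : Sec d) (f : (Fin (2*d) → ℝ) → ℝ) (x : Fin (2*d) → ℝ) : ℝ :=
  (1/2) * ∑ B, pd f B x *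
    ∑ A, (e₁ x A * pd (fun y => e₂ y (σd d A)) (σd d B) x
          - e₂ x A * pd (fun y => e₁ y (σd d A)) (σd d B) x)

/-- The Nijenhuis-type tensor N(e₁,e₂,e₃). -/
def Nform {d : ℕ} (e₁ e₂ e₃ : Sec d) (x : Fin (2*d) → ℝ) : ℝ :=
  (1/3) * (pair (cbr e₁ e₂) e₃ x + pair (cbr e₂ e₃) e₁ x + pair (cbr e₃ e₁) e₂ x)

/-- The Jacobiator of the C-bracket. -/
def Jac {d : ℕ} (e₁ e₂ e₃ : Sec d) : Sec d := fun x B =>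
  cbr (cbr e₁ e₂) e₃ x B + cbr (cbr e₂ e₃) e₁ x B + cbr (cbr e₃ e₁) e₂ x B

/-- SC_Jac(e₁,e₂,e₃) = Jac(e₁,e₂,e₃) − D N(e₁,e₂,e₃). -/
def SCJac {d : ℕ} (e₁ e₂ e₃ : Sec d) : Sec d := fun x B =>
  Jac e₁ e₂ e₃ x B - Dsec (Nform e₁ e₂ e₃) x B


lemma sigma_val (d : ℕ) (B : Fin (2*d)) :
    ((σd d B) : ℕ) = if (B : ℕ) < d then (B : ℕ) + d else (B : ℕ) - d := by
  unfold σd; split_ifs <;> rfl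

lemma sigma_sigma (d : ℕ) (A : Fin (2*d)) : σd d (σd d A) = A := by
  apply Fin.ext
  rw [sigma_val, sigma_val]
  have := A.isLt
  split_ifs <;> omega

lemma pd_smooth {n : ℕ} {f : (Fin n → ℝ) → ℝ} (hf : ContDiff ℝ (⊤ : ℕ∞) f) (A : Fin n) :
    ContDiff ℝ (⊤ : ℕ∞) (pd f A) :=
  (hf.fderiv_right (by simp)).clm_apply contDiff_const

lemma pd_diff {n : ℕ} {f : (Fin n → ℝ) → ℝ} (hf : ContDiff ℝ (⊤ : ℕ∞) f) (A : Fin n)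
    (x : Fin n → ℝ) : DifferentiableAt ℝ (pd f A) x :=
  ((pd_smooth hf A).differentiable (by simp)).differentiableAt

lemma pd_const_mul {n : ℕ} {g : (Fin n → ℝ) → ℝ} {x : Fin n → ℝ}
    (hg : DifferentiableAt ℝ g x) (c : ℝ) (A : Fin n) :
    pd (fun y => c * g y) A x = c * pd g A x := by
  unfold pd
  rw [fderiv_const_mul hg]
  simp

lemma pd_mul {n : ℕ} {g h : (Fin n → ℝ) → ℝ} {x : Fin n → ℝ} (hg : DifferentiableAt ℝ g x)
    (hh : DifferentiableAt ℝ h x) (A : Fin n) :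
    pd (fun y => g y * h y) A x = pd g A x * h x + g x * pd h A x := by
  unfold pd
  rw [fderiv_fun_mul hg hh]
  simp only [ContinuousLinearMap.add_apply, ContinuousLinearMap.smul_apply, smul_eq_mul]
  ring

lemma pd_sum {n : ℕ} {ι : Type*} (s : Finset ι) {g : ι → (Fin n → ℝ) → ℝ} {x : Fin n → ℝ}
    (hg : ∀ i ∈ s, DifferentiableAt ℝ (g i) x) (A : Fin n) :
    pd (fun y => ∑ i ∈ s, g i y) A x = ∑ i ∈ s, pd (g i) A x := by
  unfold pd
  rw [fderiv_fun_sum hg]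
  simp

lemma pd_symm {n : ℕ} {f : (Fin n → ℝ) → ℝ} (hf : ContDiff ℝ (⊤ : ℕ∞) f) (A B : Fin n)
    (x : Fin n → ℝ) : pd (pd f A) B x = pd (pd f B) A x := by
  have hsymm : IsSymmSndFDerivAt ℝ f x := (hf.contDiffAt).isSymmSndFDerivAt (by rw [minSmoothness_of_isRCLikeNormedField]; exact WithTop.coe_le_coe.mpr (le_top : (2:ℕ∞) ≤ ⊤))
  have key : ∀ C D : Fin n, pd (pd f C) D x
      = fderiv ℝ (fderiv ℝ f) x (Pi.single D 1) (Pi.single C 1) := by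
    intro C D
    have hdf : DifferentiableAt ℝ (fderiv ℝ f) x :=
      ((hf.fderiv_right (m := (⊤ : ℕ∞)) (by simp)).differentiable (by simp)).differentiableAt
    have : pd f C = fun y => ((fderiv ℝ f y) : (Fin n → ℝ) →L[ℝ] ℝ) (Pi.single C 1) := rfl
    rw [this]
    unfold pd
    rw [fderiv_clm_apply hdf (differentiableAt_const _)]
    simp
  rw [key A B, key B A, hsymm]

lemma sum_cancel {α : Type*} [Fintype α] (ψ : α → α) (hψ : Function.Involutive ψ)
    (Φ : α → ℝ) (h : ∀ p, Φ p + Φ (ψ p) = 0) : ∑ p, Φ p = 0 := by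
  have h2 : ∑ p, Φ (ψ p) = ∑ p, Φ p :=
    Fintype.sum_bijective ψ hψ.bijective _ _ (fun p => rfl)
  have h3 : ∑ p, (Φ p + Φ (ψ p)) = 0 := Finset.sum_eq_zero fun p _ => h p
  rw [Finset.sum_add_distrib, h2] at h3
  linarith

lemma alg {m : ℕ} (σ : Fin m → Fin m) (hσ : ∀ A, σ (σ A) = A)
    (E F1 F2 : Fin m → ℝ) (dE H1 H2 : Fin m → Fin m → ℝ)
    (s1 : ∀ A B, H1 A B = H1 B A) (s2 : ∀ A B, H2 A B = H2 B A) :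
    (∑ B, ((∑ A, E A * ((1/2) * H1 (σ B) A)
        - (1/2) * ∑ A, E A * ((1/2) * H1 A (σ B)))
      - (∑ A, (1/2) * F1 (σ A) * dE B A
        - (1/2) * ∑ A, (1/2) * F1 (σ A) * dE (σ A) (σ B))) * ((1/2) * F2 B))
    + (∑ B, ((∑ A, E A * ((1/2) * H2 (σ B) A)
        - (1/2) * ∑ A, E A * ((1/2) * H2 A (σ B)))
      - (∑ A, (1/2) * F2 (σ A) * dE B A
        - (1/2) * ∑ A, (1/2) * F2 (σ A) * dE (σ A) (σ B))) * ((1/2) * F1 B))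
    + (∑ B, ((1/2) * (∑ A, (dE A (σ B) * ((1/2) * F1 A) + E A * ((1/2) * H1 A (σ B)))))
        * ((1/2) * F2 B))
    + (∑ B, ((1/2) * (∑ A, (dE A (σ B) * ((1/2) * F2 A) + E A * ((1/2) * H2 A (σ B)))))
        * ((1/2) * F1 B))
    = 2 * ∑ A, E A * ((1/2) * ∑ B,
        ((1/2) * H1 (σ B) A * ((1/2) * F2 B) + (1/2) * F1 (σ B) * ((1/2) * H2 B A))) := by
  have hb := Function.Involutive.bijective hσ
  have reidx : ∀ g : Fin m → ℝ, ∑ A, g (σ A) = ∑ A, g A := fun g =>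
    Fintype.sum_bijective σ hb (fun A => g (σ A)) g (fun _ => rfl)
  -- canonical forms
  have hL : ∀ (F G : Fin m → ℝ) (H : Fin m → Fin m → ℝ), (∀ A B, H A B = H B A) →
      (∑ B, ((∑ A, E A * ((1/2) * H (σ B) A)
        - (1/2) * ∑ A, E A * ((1/2) * H A (σ B)))
      - (∑ A, (1/2) * F (σ A) * dE B A
        - (1/2) * ∑ A, (1/2) * F (σ A) * dE (σ A) (σ B))) * ((1/2) * G B))
      = ∑ B, ∑ A, ((1/8) * (E A * H A (σ B) * G B)
          - (1/4) * (F (σ A) * dE B A * G B)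
          + (1/8) * (F (σ A) * dE (σ A) (σ B) * G B)) := by
    intro F G H s
    refine Finset.sum_congr rfl fun B _ => ?_
    have e1 : ∑ A, E A * ((1/2) * H (σ B) A) = ∑ A, E A * ((1/2) * H A (σ B)) :=
      Finset.sum_congr rfl fun A _ => by rw [s (σ B) A]
    rw [e1]
    simp only [Finset.mul_sum, ← Finset.sum_sub_distrib, ← Finset.sum_add_distrib,
      Finset.sum_mul]
    exact Finset.sum_congr rfl fun A _ => by ring
  have hT : ∀ (F G : Fin m → ℝ) (H : Fin m → Fin m → ℝ),
      (∑ B, ((1/2) * (∑ A, (dE A (σ B) * ((1/2) * F A) + E A * ((1/2) * H A (σ B)))))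
        * ((1/2) * G B))
      = ∑ B, ∑ A, ((1/8) * (F (σ A) * dE (σ A) (σ B) * G B)
          + (1/8) * (E A * H A (σ B) * G B)) := by
    intro F G H
    refine Finset.sum_congr rfl fun B _ => ?_
    have e1 : ∑ A, (dE A (σ B) * ((1/2) * F A) + E A * ((1/2) * H A (σ B)))
        = ∑ A, (dE (σ A) (σ B) * ((1/2) * F (σ A)) + E A * ((1/2) * H A (σ B))) := by
      rw [Finset.sum_add_distrib, Finset.sum_add_distrib,
        reidx (fun A => dE A (σ B) * ((1/2) * F A))]
    rw [e1]
    simp only [Finset.mul_sum, ← Finset.sum_add_distrib, Finset.sum_mul]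
    exact Finset.sum_congr rfl fun A _ => by ring
  have hR : (2 : ℝ) * ∑ A, E A * ((1/2) * ∑ B,
        ((1/2) * H1 (σ B) A * ((1/2) * F2 B) + (1/2) * F1 (σ B) * ((1/2) * H2 B A)))
      = ∑ B, ∑ A, ((1/4) * (E A * H1 A (σ B) * F2 B)
          + (1/4) * (E A * F1 (σ B) * H2 B A)) := by
    rw [show ∑ A, E A * ((1/2) * ∑ B,
        ((1/2) * H1 (σ B) A * ((1/2) * F2 B) + (1/2) * F1 (σ B) * ((1/2) * H2 B A)))
      = ∑ A, ∑ B, E A * ((1/2) * ((1/2) * H1 (σ B) A * ((1/2) * F2 B)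
          + (1/2) * F1 (σ B) * ((1/2) * H2 B A))) from
      Finset.sum_congr rfl fun A _ => by rw [Finset.mul_sum, Finset.mul_sum]]
    rw [Finset.sum_comm, Finset.mul_sum]
    refine Finset.sum_congr rfl fun B _ => ?_
    rw [Finset.mul_sum]
    refine Finset.sum_congr rfl fun A _ => ?_
    rw [s1 (σ B) A]
    ring
  rw [hL F1 F2 H1 s1, hL F2 F1 H2 s2, hT F1 F2 H1, hT F2 F1 H2, hR]
  rw [← sub_eq_zero]
  simp only [← Finset.sum_add_distrib, ← Finset.sum_sub_distrib]
  rw [← Finset.sum_product' (f := fun B A =>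
    ((1/8) * (E A * H1 A (σ B) * F2 B) - (1/4) * (F1 (σ A) * dE B A * F2 B)
        + (1/8) * (F1 (σ A) * dE (σ A) (σ B) * F2 B)
      + ((1/8) * (E A * H2 A (σ B) * F1 B) - (1/4) * (F2 (σ A) * dE B A * F1 B)
        + (1/8) * (F2 (σ A) * dE (σ A) (σ B) * F1 B))
      + ((1/8) * (F1 (σ A) * dE (σ A) (σ B) * F2 B) + (1/8) * (E A * H1 A (σ B) * F2 B))
      + ((1/8) * (F2 (σ A) * dE (σ A) (σ B) * F1 B) + (1/8) * (E A * H2 A (σ B) * F1 B))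
      - ((1/4) * (E A * H1 A (σ B) * F2 B) + (1/4) * (E A * F1 (σ B) * H2 B A)))),
    Finset.univ_product_univ]
  have hsplit : ∀ p : Fin m × Fin m,
      ((1/8) * (E p.2 * H1 p.2 (σ p.1) * F2 p.1) - (1/4) * (F1 (σ p.2) * dE p.1 p.2 * F2 p.1)
        + (1/8) * (F1 (σ p.2) * dE (σ p.2) (σ p.1) * F2 p.1)
      + ((1/8) * (E p.2 * H2 p.2 (σ p.1) * F1 p.1) - (1/4) * (F2 (σ p.2) * dE p.1 p.2 * F1 p.1)
        + (1/8) * (F2 (σ p.2) * dE (σ p.2) (σ p.1) * F1 p.1))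
      + ((1/8) * (F1 (σ p.2) * dE (σ p.2) (σ p.1) * F2 p.1)
        + (1/8) * (E p.2 * H1 p.2 (σ p.1) * F2 p.1))
      + ((1/8) * (F2 (σ p.2) * dE (σ p.2) (σ p.1) * F1 p.1)
        + (1/8) * (E p.2 * H2 p.2 (σ p.1) * F1 p.1))
      - ((1/4) * (E p.2 * H1 p.2 (σ p.1) * F2 p.1) + (1/4) * (E p.2 * F1 (σ p.1) * H2 p.1 p.2)))
      = ((1/4) * (E p.2 * H2 p.2 (σ p.1) * F1 p.1)
          - (1/4) * (E p.2 * F1 (σ p.1) * H2 p.1 p.2))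
        + (-(1/4) * (F1 (σ p.2) * dE p.1 p.2 * F2 p.1)
          + (1/4) * (F1 (σ p.2) * dE (σ p.2) (σ p.1) * F2 p.1)
          - (1/4) * (F2 (σ p.2) * dE p.1 p.2 * F1 p.1)
          + (1/4) * (F2 (σ p.2) * dE (σ p.2) (σ p.1) * F1 p.1)) := fun p => by ring
  rw [Finset.sum_congr rfl fun p _ => hsplit p, Finset.sum_add_distrib]
  have hz1 : ∑ p : Fin m × Fin m, ((1/4) * (E p.2 * H2 p.2 (σ p.1) * F1 p.1)
      - (1/4) * (E p.2 * F1 (σ p.1) * H2 p.1 p.2)) = 0 := by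
    apply sum_cancel (fun p => (σ p.1, p.2)) (fun p => by simp [hσ])
    intro p
    simp only [hσ]
    linear_combination (-(1/4) * E p.2 * F1 (σ p.1)) * (s2 p.1 p.2)
      + (1/4 * E p.2 * F1 p.1) * (s2 p.2 (σ p.1))
  have hz2 : ∑ p : Fin m × Fin m, (-(1/4) * (F1 (σ p.2) * dE p.1 p.2 * F2 p.1)
      + (1/4) * (F1 (σ p.2) * dE (σ p.2) (σ p.1) * F2 p.1)
      - (1/4) * (F2 (σ p.2) * dE p.1 p.2 * F1 p.1)
      + (1/4) * (F2 (σ p.2) * dE (σ p.2) (σ p.1) * F1 p.1)) = 0 := by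
    apply sum_cancel (fun p => (σ p.2, σ p.1)) (fun p => by simp [hσ])
    intro p
    simp only [hσ]
    ring
  rw [hz1, hz2]
  ring


lemma pd_Dsec {d : ℕ} {f : (Fin (2*d) → ℝ) → ℝ} (hf : ContDiff ℝ (⊤ : ℕ∞) f) (C A : Fin (2*d))
    (x : Fin (2*d) → ℝ) :
    pd (fun y => Dsec f y C) A x = 1/2 * pd (pd f (σd d C)) A x :=
  pd_const_mul (pd_diff hf (σd d C) x) _ _

lemma pd_pair_eD {d : ℕ} {e : Sec d} {f : (Fin (2*d) → ℝ) → ℝ}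
    (he : ContDiff ℝ (⊤ : ℕ∞) e) (hf : ContDiff ℝ (⊤ : ℕ∞) f) (C : Fin (2*d)) (x : Fin (2*d) → ℝ) :
    pd (pair e (Dsec f)) C x
      = ∑ A, (pd (fun y => e y A) C x * (1/2 * pd f A x)
          + e x A * (1/2 * pd (pd f A) C x)) := by
  have hcd : ∀ A, DifferentiableAt ℝ (fun y => e y A) x := fun A =>
    ((contDiff_pi.mp he A).differentiable (by simp)).differentiableAt
  have hfun : pair e (Dsec f) = fun y => ∑ A, e y A * (1/2 * pd f A y) := by
    funext y
    unfold pair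
    refine Finset.sum_congr rfl fun A _ => ?_
    show e y A * ((1/2) * pd f (σd d (σd d A)) y) = _
    rw [sigma_sigma]
  rw [hfun, pd_sum Finset.univ (g := fun A y => e y A * (1/2 * pd f A y)) (fun A _ => (hcd A).mul ((pd_diff hf A x).const_mul _)) C]
  refine Finset.sum_congr rfl fun A _ => ?_
  rw [pd_mul (hcd A) ((pd_diff hf A x).const_mul _), pd_const_mul (pd_diff hf A x)]

lemma pd_DD_eval {d : ℕ} {f₁ f₂ : (Fin (2*d) → ℝ) → ℝ}
    (hf₁ : ContDiff ℝ (⊤ : ℕ∞) f₁) (hf₂ : ContDiff ℝ (⊤ : ℕ∞) f₂) (A : Fin (2*d)) (x : Fin (2*d) → ℝ) :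
    pd (pair (Dsec f₁) (Dsec f₂)) A x
      = ∑ B, (1/2 * pd (pd f₁ (σd d B)) A x * (1/2 * pd f₂ B x)
          + 1/2 * pd f₁ (σd d B) x * (1/2 * pd (pd f₂ B) A x)) := by
  have hfun : pair (Dsec f₁) (Dsec f₂)
      = fun y => ∑ B, 1/2 * pd f₁ (σd d B) y * (1/2 * pd f₂ B y) := by
    funext y
    unfold pair
    refine Finset.sum_congr rfl fun B _ => ?_
    show (1/2) * pd f₁ (σd d B) y * ((1/2) * pd f₂ (σd d (σd d B)) y) = _
    rw [sigma_sigma]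
  rw [hfun, pd_sum Finset.univ (g := fun B y => 1/2 * pd f₁ (σd d B) y * (1/2 * pd f₂ B y))
    (fun B _ => ((pd_diff hf₁ (σd d B) x).const_mul _).mul ((pd_diff hf₂ B x).const_mul _)) A]
  refine Finset.sum_congr rfl fun B _ => ?_
  rw [pd_mul ((pd_diff hf₁ (σd d B) x).const_mul _) ((pd_diff hf₂ B x).const_mul _) A,
    pd_const_mul (pd_diff hf₁ (σd d B) x), pd_const_mul (pd_diff hf₂ B x)]

lemma pair_cbr_eval {d : ℕ} {e : Sec d} {f g : (Fin (2*d) → ℝ) → ℝ}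
    (he : ContDiff ℝ (⊤ : ℕ∞) e) (hf : ContDiff ℝ (⊤ : ℕ∞) f) (x : Fin (2*d) → ℝ) :
    pair (cbr e (Dsec f)) (Dsec g) x
      = ∑ B, ((∑ A, e x A * (1/2 * pd (pd f (σd d B)) A x)
          - 1/2 * ∑ A, e x A * (1/2 * pd (pd f A) (σd d B) x))
        - (∑ A, 1/2 * pd f (σd d A) x * pd (fun y => e y B) A x
          - 1/2 * ∑ A, 1/2 * pd f (σd d A) x * pd (fun y => e y (σd d A)) (σd d B) x))
        * (1/2 * pd g B x) := by
  unfold pair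
  refine Finset.sum_congr rfl fun B _ => ?_
  have hfac : Dsec g x (σd d B) = 1/2 * pd g B x := by
    show (1/2) * pd g (σd d (σd d B)) x = _
    rw [sigma_sigma]
  rw [hfac]
  congr 1
  show (∑ A, e x A * pd (fun y => Dsec f y B) A x
      - (1/2) * ∑ A, e x A * pd (fun y => Dsec f y (σd d A)) (σd d B) x)
    - (∑ A, Dsec f x A * pd (fun y => e y B) A x
      - (1/2) * ∑ A, Dsec f x A * pd (fun y => e y (σd d A)) (σd d B) x) = _
  rw [show (∑ A, e x A * pd (fun y => Dsec f y B) A x)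
      = ∑ A, e x A * (1/2 * pd (pd f (σd d B)) A x) from
    Finset.sum_congr rfl fun A _ => by rw [pd_Dsec hf B A x]]
  rw [show (∑ A, e x A * pd (fun y => Dsec f y (σd d A)) (σd d B) x)
      = ∑ A, e x A * (1/2 * pd (pd f A) (σd d B) x) from
    Finset.sum_congr rfl fun A _ => by rw [pd_Dsec hf (σd d A) (σd d B) x, sigma_sigma]]
  rfl

lemma pair_Dpair_eval {d : ℕ} {e : Sec d} {f g : (Fin (2*d) → ℝ) → ℝ}
    (he : ContDiff ℝ (⊤ : ℕ∞) e) (hf : ContDiff ℝ (⊤ : ℕ∞) f) (x : Fin (2*d) → ℝ) :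
    pair (Dsec (pair e (Dsec f))) (Dsec g) x
      = ∑ B, (1/2 * ∑ A, (pd (fun y => e y A) (σd d B) x * (1/2 * pd f A x)
            + e x A * (1/2 * pd (pd f A) (σd d B) x))) * (1/2 * pd g B x) := by
  show ∑ B, Dsec (pair e (Dsec f)) x B * Dsec g x (σd d B) = _
  refine Finset.sum_congr rfl fun B _ => ?_
  have h2 : Dsec g x (σd d B) = 1/2 * pd g B x := by
    show (1/2) * pd g (σd d (σd d B)) x = _
    rw [sigma_sigma]
  have h1 : Dsec (pair e (Dsec f)) x B
      = 1/2 * ∑ A, (pd (fun y => e y A) (σd d B) x * (1/2 * pd f A x)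
          + e x A * (1/2 * pd (pd f A) (σd d B) x)) := by
    show (1/2) * pd (pair e (Dsec f)) (σd d B) x = _
    rw [pd_pair_eD he hf (σd d B) x]
  rw [h1, h2]

lemma pair_e_DD_eval {d : ℕ} {e : Sec d} {f₁ f₂ : (Fin (2*d) → ℝ) → ℝ}
    (hf₁ : ContDiff ℝ (⊤ : ℕ∞) f₁) (hf₂ : ContDiff ℝ (⊤ : ℕ∞) f₂) (x : Fin (2*d) → ℝ) :
    pair e (Dsec (pair (Dsec f₁) (Dsec f₂))) x
      = ∑ A, e x A * (1/2 * ∑ B, (1/2 * pd (pd f₁ (σd d B)) A x * (1/2 * pd f₂ B x)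
          + 1/2 * pd f₁ (σd d B) x * (1/2 * pd (pd f₂ B) A x))) := by
  show ∑ A, e x A * Dsec (pair (Dsec f₁) (Dsec f₂)) x (σd d A) = _
  refine Finset.sum_congr rfl fun A _ => ?_
  have h1 : Dsec (pair (Dsec f₁) (Dsec f₂)) x (σd d A)
      = 1/2 * ∑ B, (1/2 * pd (pd f₁ (σd d B)) A x * (1/2 * pd f₂ B x)
          + 1/2 * pd f₁ (σd d B) x * (1/2 * pd (pd f₂ B) A x)) := by
    show (1/2) * pd (pair (Dsec f₁) (Dsec f₂)) (σd d (σd d A)) x = _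
    rw [sigma_sigma, pd_DD_eval hf₁ hf₂ A x]
  rw [h1]

/-- The n = 4 homotopy consistency for arguments (μ₀, e, f₁, f₂). -/
theorem homotopy_n4_mu0_e_f_f {d : ℕ} (hd : 1 ≤ d) (e : Sec d)
    (f₁ f₂ : (Fin (2*d) → ℝ) → ℝ)
    (he : ContDiff ℝ (⊤ : ℕ∞) e) (hf₁ : ContDiff ℝ (⊤ : ℕ∞) f₁) (hf₂ : ContDiff ℝ (⊤ : ℕ∞) f₂) :
    ∀ x : Fin (2*d) → ℝ,
      pair (cbr e (Dsec f₁)) (Dsec f₂) x + pair (cbr e (Dsec f₂)) (Dsec f₁) x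
        + pair (Dsec (pair e (Dsec f₁))) (Dsec f₂) x
        + pair (Dsec (pair e (Dsec f₂))) (Dsec f₁) x
      = 2 * pair e (Dsec (pair (Dsec f₁) (Dsec f₂))) x := by
  intro x
  rw [pair_cbr_eval he hf₁ x, pair_cbr_eval he hf₂ x, pair_Dpair_eval he hf₁ x,
    pair_Dpair_eval he hf₂ x, pair_e_DD_eval hf₁ hf₂ x]
  exact alg (σd d) (sigma_sigma d) (fun A => e x A) (fun A => pd f₁ A x)
    (fun A => pd f₂ A x) (fun A B => pd (fun y => e y A) B x)
    (fun A B => pd (pd f₁ A) B x) (fun A B => pd (pd f₂ A) B x)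
    (fun A B => pd_symm hf₁ A B x) (fun A B => pd_symm hf₂ A B x)

end
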